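/- For a Rademacher sum X = Σ_{i∈I} v_i g_i with v_i i.i.d. Rademacher and real coefficients g_i, the following holds: E[sign(⟨g, v⟩)·⟨g, v⟩] = E[|⟨g, v⟩|] ≥ (1/√3)·(Σ_{i∈I} g_i²)^{1/2}, where ⟨g, v⟩ = Σ_{i∈I} v_i g_i. -/

import Mathlib

open MeasureTheory ProbabilityTheory Finset

private lemma real_sign_mul_self (x : ℝ) : Real.sign x * x = |x| := by
  rcases lt_trichotomy x 0 with h | h | h
  · rw [Real.sign_of_neg h, abs_of_neg h]; ring
  · simp [h]
  · rw [Real.sign_of_pos h, abs_of_pos h]; ring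

private lemma bdd_integrable {Ω : Type*} [MeasurableSpace Ω] {μ : Measure Ω}
    [IsProbabilityMeasure μ] {F : Ω → ℝ} (hF : Measurable F) (C : ℝ)
    (hC : ∀ ω, |F ω| ≤ C) : Integrable F μ := by
  refine (memLp_top_of_bound hF.aestronglyMeasurable C ?_).integrable le_top
  exact Filter.Eventually.of_forall fun ω => by simpa [Real.norm_eq_abs] using hC ω

/-- Cauchy–Schwarz for integrals. -/
private lemma cs_integral {Ω : Type*} [MeasurableSpace Ω] {μ : Measure Ω}
    {f g : Ω → ℝ}
    (hf2 : Integrable (fun ω => f ω ^ 2) μ) (hg2 : Integrable (fun ω => g ω ^ 2) μ)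
    (hfg : Integrable (fun ω => f ω * g ω) μ) :
    (∫ ω, f ω * g ω ∂μ) ^ 2 ≤ (∫ ω, f ω ^ 2 ∂μ) * (∫ ω, g ω ^ 2 ∂μ) := by
  set P := ∫ ω, f ω ^ 2 ∂μ with hP'
  set Q := ∫ ω, f ω * g ω ∂μ with hQ'
  set R := ∫ ω, g ω ^ 2 ∂μ with hR'
  have hP : 0 ≤ P := integral_nonneg fun ω => sq_nonneg _
  have hR : 0 ≤ R := integral_nonneg fun ω => sq_nonneg _
  have key : ∀ t : ℝ, 0 ≤ P + 2 * t * Q + t ^ 2 * R := by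
    intro t
    have h0 : 0 ≤ ∫ ω, (f ω + t * g ω) ^ 2 ∂μ := integral_nonneg fun ω => sq_nonneg _
    have heq : (fun ω => (f ω + t * g ω) ^ 2)
        = fun ω => f ω ^ 2 + ((2 * t) * (f ω * g ω) + t ^ 2 * g ω ^ 2) := by
      funext ω; ring
    have i23 : Integrable (fun ω => 2 * t * (f ω * g ω) + t ^ 2 * g ω ^ 2) μ :=
      (hfg.const_mul (2 * t)).add (hg2.const_mul (t ^ 2))
    rw [heq, integral_add hf2 i23,
      integral_add (hfg.const_mul (2 * t)) (hg2.const_mul (t ^ 2)),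
      integral_const_mul, integral_const_mul] at h0
    calc (0:ℝ) ≤ P + (2 * t * Q + t ^ 2 * R) := h0
    _ = P + 2 * t * Q + t ^ 2 * R := by ring
  rcases hR.eq_or_lt with hR0 | hRpos
  · have hQ : Q = 0 := by
      by_contra hQ
      have ht := key (-(P + 1) / (2 * Q))
      rw [← hR0] at ht
      have h2 : P + 2 * (-(P + 1) / (2 * Q)) * Q + (-(P + 1) / (2 * Q)) ^ 2 * 0 = -1 := by
        field_simp
        ring
      rw [h2] at ht; linarith
    rw [hQ, ← hR0]; simp
  · have ht := key (-Q / R)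
    have h2 : P + 2 * (-Q / R) * Q + (-Q / R) ^ 2 * R = P - Q ^ 2 / R := by
      field_simp; ring
    rw [h2] at ht
    have h3 : Q ^ 2 / R ≤ P := by linarith
    calc Q ^ 2 = Q ^ 2 / R * R := by field_simp
    _ ≤ P * R := mul_le_mul_of_nonneg_right h3 hR

private lemma cs_integral' {Ω : Type*} [MeasurableSpace Ω] {μ : Measure Ω}
    (f g F G H : Ω → ℝ)
    (h1 : ∀ ω, f ω ^ 2 = F ω) (h2 : ∀ ω, g ω ^ 2 = G ω)
    (h3 : ∀ ω, f ω * g ω = H ω)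
    (hF : Integrable F μ) (hG : Integrable G μ) (hH : Integrable H μ) :
    (∫ ω, H ω ∂μ) ^ 2 ≤ (∫ ω, F ω ∂μ) * (∫ ω, G ω ∂μ) := by
  have e1 : (fun ω => f ω ^ 2) = F := funext h1
  have e2 : (fun ω => g ω ^ 2) = G := funext h2
  have e3 : (fun ω => f ω * g ω) = H := funext h3
  have h := cs_integral (μ := μ) (f := f) (g := g)
    (by rw [e1]; exact hF) (by rw [e2]; exact hG) (by rw [e3]; exact hH)
  rw [e1, e2, e3] at h
  exact h

/-- For a Rademacher sum X = ∑_{i∈I} v_i g_i, E[sign(X)·X] = E[|X|] and it is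
lower bounded by (1/√3)·√(∑ g_i²). -/
theorem sign_inner_product_lower_bound {Ω : Type*} [MeasurableSpace Ω]
    (μ : Measure Ω) [IsProbabilityMeasure μ] (n : ℕ) (I : Finset (Fin n))
    (v : Fin n → Ω → ℝ)
    (hmeas : ∀ i, Measurable (v i))
    (hval : ∀ i ω, v i ω = 1 ∨ v i ω = -1)
    (hlaw : ∀ i, μ {ω | v i ω = 1} = 1/2)
    (hindep : iIndepFun v μ)
    (g : Fin n → ℝ) :
    ∫ ω, Real.sign (∑ i ∈ I, v i ω * g i) * (∑ i ∈ I, v i ω * g i) ∂μ =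
        ∫ ω, |∑ i ∈ I, v i ω * g i| ∂μ ∧
      (1 / Real.sqrt 3) * Real.sqrt (∑ i ∈ I, (g i) ^ 2) ≤
        ∫ ω, |∑ i ∈ I, v i ω * g i| ∂μ := by
  classical
  have hv1 : ∀ i ω, |v i ω| = 1 := by
    intro i ω; rcases hval i ω with h | h <;> simp [h]
  set f : Fin n → Ω → ℝ := fun i ω => v i ω * g i with hf
  have hfmeas : ∀ i, Measurable (f i) := fun i => (hmeas i).mul_const _
  have hfindep : iIndepFun f μ :=
    hindep.comp (fun i x => x * g i) (fun i => measurable_mul_const _)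
  have hfabs : ∀ i ω, |f i ω| ≤ |g i| := by
    intro i ω
    show |v i ω * g i| ≤ |g i|
    rw [abs_mul, hv1, one_mul]
  -- expectation of v i is zero
  have hEv : ∀ i, ∫ ω, v i ω ∂μ = 0 := by
    intro i
    set A : Set Ω := {ω | v i ω = 1} with hA
    have hμA : μ A = 1/2 := hlaw i
    have hAmeas : MeasurableSet A := by
      have h1 : A = v i ⁻¹' {1} := by ext ω; simp [hA]
      rw [h1]; exact (hmeas i) (measurableSet_singleton 1)
    have hrepr : v i = fun ω => A.indicator (fun _ => (2:ℝ)) ω + (-1) := by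
      funext ω
      rcases hval i ω with h | h
      · have hm : ω ∈ A := h
        rw [Set.indicator_of_mem hm, h]; norm_num
      · have hm : ω ∉ A := by
          rw [hA]; simp only [Set.mem_setOf_eq, h]; norm_num
        rw [Set.indicator_of_notMem hm, h]; norm_num
    rw [hrepr, integral_add ((integrable_const (2:ℝ)).indicator hAmeas) (integrable_const _),
      integral_indicator_const _ hAmeas, integral_const, measureReal_def, measureReal_def, hμA]
    simp [ENNReal.toReal_div]
  have hEf : ∀ i, ∫ ω, f i ω ∂μ = 0 := by
    intro i
    have h1 : ∫ ω, f i ω ∂μ = (∫ ω, v i ω ∂μ) * g i := integral_mul_const _ _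
    rw [h1, hEv i, zero_mul]
  -- boundedness and measurability of partial sums
  set M : ℝ := ∑ i, |g i| with hM
  have hM0 : 0 ≤ M := Finset.sum_nonneg fun i _ => abs_nonneg _
  have hSbd : ∀ (s : Finset (Fin n)) ω, |∑ i ∈ s, f i ω| ≤ M := by
    intro s ω
    calc |∑ i ∈ s, f i ω| ≤ ∑ i ∈ s, |f i ω| := abs_sum_le_sum_abs _ _
    _ ≤ ∑ i ∈ s, |g i| := Finset.sum_le_sum fun i _ => hfabs i ω
    _ ≤ M := Finset.sum_le_sum_of_subset_of_nonneg (Finset.subset_univ s)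
        (fun i _ _ => abs_nonneg _)
  have hSmeas : ∀ s : Finset (Fin n), Measurable (fun ω => ∑ i ∈ s, f i ω) :=
    fun s => Finset.measurable_sum s fun i _ => hfmeas i
  -- integrability facts
  have int_pow : ∀ (s : Finset (Fin n)) (k : ℕ),
      Integrable (fun ω => (∑ i ∈ s, f i ω) ^ k) μ := by
    intro s k
    refine bdd_integrable ((hSmeas s).pow_const k) (M ^ k) fun ω => ?_
    rw [abs_pow]
    exact pow_le_pow_left₀ (abs_nonneg _) (hSbd s ω) k
  have int_powmul : ∀ (s : Finset (Fin n)) (j : Fin n) (k : ℕ),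
      Integrable (fun ω => (∑ i ∈ s, f i ω) ^ k * f j ω) μ := by
    intro s j k
    refine bdd_integrable (((hSmeas s).pow_const k).mul (hfmeas j)) (M ^ k * |g j|)
      fun ω => ?_
    rw [abs_mul, abs_pow]
    exact mul_le_mul (pow_le_pow_left₀ (abs_nonneg _) (hSbd s ω) k) (hfabs j ω)
      (abs_nonneg _) (pow_nonneg hM0 k)
  have int_mul : ∀ (s : Finset (Fin n)) (j : Fin n),
      Integrable (fun ω => (∑ i ∈ s, f i ω) * f j ω) μ := by
    intro s j
    refine bdd_integrable ((hSmeas s).mul (hfmeas j)) (M * |g j|) fun ω => ?_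
    rw [abs_mul]
    exact mul_le_mul (hSbd s ω) (hfabs j ω) (abs_nonneg _) hM0
  -- moment computations by induction
  have key : ∀ s : Finset (Fin n),
      (∫ ω, (∑ i ∈ s, f i ω) ^ 2 ∂μ = ∑ i ∈ s, g i ^ 2) ∧
      (∫ ω, (∑ i ∈ s, f i ω) ^ 4 ∂μ ≤ 3 * (∑ i ∈ s, g i ^ 2) ^ 2) := by
    intro s
    induction s using Finset.induction_on with
    | empty => simp
    | @insert j s hjs ih =>
      have hb2 : ∀ ω, f j ω ^ 2 = g j ^ 2 := by
        intro ω
        show (v j ω * g j) ^ 2 = g j ^ 2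
        rcases hval j ω with h | h <;> rw [h] <;> ring
      have hsum : ∀ ω, ∑ i ∈ insert j s, f i ω = (∑ i ∈ s, f i ω) + f j ω := by
        intro ω; rw [Finset.sum_insert hjs]; ring
      have hind : IndepFun (fun ω => ∑ i ∈ s, f i ω) (f j) μ := by
        have h1 := hfindep.indepFun_finsetSum_of_notMem hfmeas hjs
        have h2 : (∑ i ∈ s, f i) = fun ω => ∑ i ∈ s, f i ω := by
          funext ω; simp [Finset.sum_apply]
        rwa [h2] at h1
      have hmul1 : ∫ ω, (∑ i ∈ s, f i ω) * f j ω ∂μ = 0 := by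
        have h1 := hind.integral_mul_eq_mul_integral (hSmeas s).aestronglyMeasurable
          (hfmeas j).aestronglyMeasurable
        rw [hEf j, mul_zero] at h1
        exact h1
      have hmul3 : ∫ ω, (∑ i ∈ s, f i ω) ^ 3 * f j ω ∂μ = 0 := by
        have hind3 : IndepFun (fun ω => (∑ i ∈ s, f i ω) ^ 3) (f j) μ :=
          hind.comp (measurable_id.pow_const 3) measurable_id
        have h1 := hind3.integral_mul_eq_mul_integral ((hSmeas s).pow_const 3).aestronglyMeasurable
          (hfmeas j).aestronglyMeasurable
        rw [hEf j, mul_zero] at h1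
        exact h1
      have hB := ih.1
      have hD := ih.2
      constructor
      · have heq : (fun ω => (∑ i ∈ insert j s, f i ω) ^ 2)
            = fun ω => (∑ i ∈ s, f i ω) ^ 2
              + (2 * ((∑ i ∈ s, f i ω) * f j ω) + g j ^ 2) := by
          funext ω
          rw [hsum ω]
          linear_combination hb2 ω
        have i2 : Integrable (fun ω => 2 * ((∑ i ∈ s, f i ω) * f j ω) + g j ^ 2) μ :=
          ((int_mul s j).const_mul 2).add (integrable_const _)
        rw [heq, integral_add (int_pow s 2) i2,
          integral_add ((int_mul s j).const_mul 2) (integrable_const _),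
          integral_const_mul, hmul1, hB, integral_const, Finset.sum_insert hjs]
        simp
        ring
      · have heq : (fun ω => (∑ i ∈ insert j s, f i ω) ^ 4)
            = fun ω => (∑ i ∈ s, f i ω) ^ 4
              + (4 * ((∑ i ∈ s, f i ω) ^ 3 * f j ω)
              + ((6 * g j ^ 2) * (∑ i ∈ s, f i ω) ^ 2
              + ((4 * g j ^ 2) * ((∑ i ∈ s, f i ω) * f j ω) + g j ^ 4))) := by
          funext ω
          rw [hsum ω]
          linear_combination (6 * (∑ i ∈ s, f i ω) ^ 2
            + 4 * (∑ i ∈ s, f i ω) * f j ω + f j ω ^ 2 + g j ^ 2) * hb2 ω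
        have i5 : Integrable (fun ω => (4 * g j ^ 2) * ((∑ i ∈ s, f i ω) * f j ω) + g j ^ 4) μ :=
          ((int_mul s j).const_mul (4 * g j ^ 2)).add (integrable_const _)
        have i4 : Integrable (fun ω => (6 * g j ^ 2) * (∑ i ∈ s, f i ω) ^ 2
            + ((4 * g j ^ 2) * ((∑ i ∈ s, f i ω) * f j ω) + g j ^ 4)) μ :=
          ((int_pow s 2).const_mul (6 * g j ^ 2)).add i5
        have i3 : Integrable (fun ω => 4 * ((∑ i ∈ s, f i ω) ^ 3 * f j ω)
            + ((6 * g j ^ 2) * (∑ i ∈ s, f i ω) ^ 2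
            + ((4 * g j ^ 2) * ((∑ i ∈ s, f i ω) * f j ω) + g j ^ 4))) μ :=
          ((int_powmul s j 3).const_mul 4).add i4
        rw [heq, integral_add (int_pow s 4) i3,
          integral_add ((int_powmul s j 3).const_mul 4) i4,
          integral_add ((int_pow s 2).const_mul (6 * g j ^ 2)) i5,
          integral_add ((int_mul s j).const_mul (4 * g j ^ 2)) (integrable_const _),
          integral_const_mul, integral_const_mul, integral_const_mul,
          hmul1, hmul3, hB, integral_const, Finset.sum_insert hjs]
        simp only [probReal_univ, measure_univ, ENNReal.toReal_one, one_smul, mul_zero, add_zero, zero_add]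
        nlinarith [hD, sq_nonneg (g j ^ 2), sq_nonneg (g j), sq_nonneg (∑ i ∈ s, g i ^ 2)]
  -- conclusion
  constructor
  · exact integral_congr_ae (Filter.Eventually.of_forall fun ω => real_sign_mul_self _)
  · show (1 / Real.sqrt 3) * Real.sqrt (∑ i ∈ I, g i ^ 2) ≤ ∫ ω, |∑ i ∈ I, f i ω| ∂μ
    have hB := (key I).1
    have hD := (key I).2
    have int_abs : Integrable (fun ω => |∑ i ∈ I, f i ω|) μ := by
      refine bdd_integrable (hSmeas I).abs M fun ω => ?_
      rw [abs_abs]; exact hSbd I ω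
    have int_abs3 : Integrable (fun ω => |∑ i ∈ I, f i ω| ^ 3) μ := by
      refine bdd_integrable ((hSmeas I).abs.pow_const 3) (M ^ 3) fun ω => ?_
      rw [abs_pow, abs_abs]
      exact pow_le_pow_left₀ (abs_nonneg _) (hSbd I ω) 3
    have CS1 := cs_integral' (μ := μ)
      (fun ω => Real.sqrt |∑ i ∈ I, f i ω|)
      (fun ω => |∑ i ∈ I, f i ω| * Real.sqrt |∑ i ∈ I, f i ω|)
      (fun ω => |∑ i ∈ I, f i ω|) (fun ω => |∑ i ∈ I, f i ω| ^ 3)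
      (fun ω => (∑ i ∈ I, f i ω) ^ 2)
      (fun ω => Real.sq_sqrt (abs_nonneg _))
      (fun ω => by rw [mul_pow, Real.sq_sqrt (abs_nonneg _)]; ring)
      (fun ω => by
        rw [show Real.sqrt |∑ i ∈ I, f i ω| * (|∑ i ∈ I, f i ω| * Real.sqrt |∑ i ∈ I, f i ω|)
            = (Real.sqrt |∑ i ∈ I, f i ω| * Real.sqrt |∑ i ∈ I, f i ω|) * |∑ i ∈ I, f i ω|
          from by ring, Real.mul_self_sqrt (abs_nonneg _), abs_mul_abs_self]
        ring)
      int_abs int_abs3 (int_pow I 2)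
    have CS2 := cs_integral' (μ := μ)
      (fun ω => |∑ i ∈ I, f i ω|) (fun ω => (∑ i ∈ I, f i ω) ^ 2)
      (fun ω => (∑ i ∈ I, f i ω) ^ 2) (fun ω => (∑ i ∈ I, f i ω) ^ 4)
      (fun ω => |∑ i ∈ I, f i ω| ^ 3)
      (fun ω => sq_abs _)
      (fun ω => by ring)
      (fun ω => by linear_combination (-|∑ i ∈ I, f i ω|) * sq_abs (∑ i ∈ I, f i ω))
      (int_pow I 2) (int_pow I 4) int_abs3
    set A := ∫ ω, |∑ i ∈ I, f i ω| ∂μ with hAdef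
    set C := ∫ ω, |∑ i ∈ I, f i ω| ^ 3 ∂μ with hCdef
    set D := ∫ ω, (∑ i ∈ I, f i ω) ^ 4 ∂μ with hDdef
    set B := ∑ i ∈ I, g i ^ 2 with hBdef
    rw [hB] at CS1 CS2
    -- CS1 : B^2 ≤ A * C, CS2 : C^2 ≤ B * D, hD : D ≤ 3 * B^2
    have hA0 : 0 ≤ A := integral_nonneg fun ω => abs_nonneg _
    have hC0 : 0 ≤ C := integral_nonneg fun ω => by positivity
    have hB0 : 0 ≤ B := Finset.sum_nonneg fun i _ => sq_nonneg _
    rcases hB0.eq_or_lt with h0 | hBpos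
    · rw [← h0, Real.sqrt_zero, mul_zero]; exact hA0
    · have hchain : B ^ 4 ≤ 3 * A ^ 2 * B ^ 3 := by
        calc B ^ 4 = B ^ 2 * B ^ 2 := by ring
        _ ≤ (A * C) * (A * C) := mul_self_le_mul_self (sq_nonneg B) CS1
        _ = A ^ 2 * C ^ 2 := by ring
        _ ≤ A ^ 2 * (B * D) := mul_le_mul_of_nonneg_left CS2 (sq_nonneg A)
        _ ≤ A ^ 2 * (B * (3 * B ^ 2)) :=
            mul_le_mul_of_nonneg_left (mul_le_mul_of_nonneg_left hD hB0) (sq_nonneg A)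
        _ = 3 * A ^ 2 * B ^ 3 := by ring
      have hBA : B ≤ 3 * A ^ 2 := by
        nlinarith [pow_pos hBpos 3, hchain]
      have hA2 : B / 3 ≤ A ^ 2 := by linarith
      calc (1 / Real.sqrt 3) * Real.sqrt B = Real.sqrt (B / 3) := by
            rw [Real.sqrt_div hB0 3]; ring
      _ ≤ Real.sqrt (A ^ 2) := Real.sqrt_le_sqrt hA2
      _ = A := Real.sqrt_sq hA0
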